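/- arXiv:1411.5246 — 3 statements merged into one kernel-verified Lean document; each statement's English description precedes it below -/
import Mathlib

section
/- Let ω(k) = |sin(πk)|. If k, k₁ are real numbers satisfying ω(k) + ω(k₁) = ω(k + k₁), then sin(πk) = 0 or sin(πk₁) = 0. -/
open Real

theorem stmt_3 (ω : ℝ → ℝ) (hω : ∀ k, ω k = |Real.sin (π * k)|)
    (k k₁ : ℝ) (h : ω k + ω k₁ = ω (k + k₁)) :
    Real.sin (π * k) = 0 ∨ Real.sin (π * k₁) = 0 := by
  by_contra hc
  push_neg at hc
  obtain ⟨ha, hb⟩ := hc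
  simp only [hω] at h
  set a := π * k
  set b := π * k₁
  have hab : π * (k + k₁) = a + b := by ring
  rw [hab, Real.sin_add] at h
  have h1 : |Real.sin a * Real.cos b + Real.cos a * Real.sin b|
      ≤ |Real.sin a| * |Real.cos b| + |Real.cos a| * |Real.sin b| := by
    calc _ ≤ |Real.sin a * Real.cos b| + |Real.cos a * Real.sin b| := abs_add_le _ _
      _ = _ := by rw [abs_mul, abs_mul]
  have hca : |Real.cos a| ≤ 1 := Real.abs_cos_le_one a
  have hcb : |Real.cos b| ≤ 1 := Real.abs_cos_le_one b
  have hsa : 0 < |Real.sin a| := abs_pos.mpr ha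
  have hsb : 0 < |Real.sin b| := abs_pos.mpr hb
  have h2 : |Real.cos b| = 1 ∧ |Real.cos a| = 1 := by
    constructor <;> nlinarith [h1, hca, hcb, hsa, hsb]
  have h3 : Real.sin b = 0 := by
    have := Real.sin_sq_add_cos_sq b
    have : Real.sin b ^ 2 = 0 := by nlinarith [sq_abs (Real.cos b), h2.1]
    exact pow_eq_zero_iff (by norm_num) |>.mp this
  exact hb h3
end

section
/- (∫₀^∞ 1/(1+z²) dz)² < (∫₀^∞ z^{3/5}/(1+z²) dz) · (∫₀^∞ z^{−3/5}/(1+z²) dz), and all three integrals are finite. -/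
/-!
The substitution `z ↦ z⁻¹` shows that `∫₀^∞ z^a/(1+z²) dz` is invariant under `a ↦ -a`, so the two
weighted integrals share a value `A`. Averaging their integrands and using `t + t⁻¹ ≥ 2` for
`t = z^a`, with strict inequality for `z > 1`, gives `∫₀^∞ 1/(1+z²) dz < A`; squaring finishes.
-/

open MeasureTheory Set Real

lemma two_le_add_inv {t : ℝ} (ht : 0 < t) : 2 ≤ t + t⁻¹ := by
  have : t + t⁻¹ - 2 = (t - 1) ^ 2 / t := by field_simp; ring
  linarith [div_nonneg (sq_nonneg (t - 1)) ht.le]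

lemma two_lt_add_inv {t : ℝ} (ht : 0 < t) (ht1 : t ≠ 1) : 2 < t + t⁻¹ := by
  have : t + t⁻¹ - 2 = (t - 1) ^ 2 / t := by field_simp; ring
  linarith [div_pos (sq_pos_of_ne_zero (sub_ne_zero.mpr ht1)) ht]

lemma rpow_ne_one_of_one_lt {z a : ℝ} (hz : 1 < z) (ha : a ≠ 0) : z ^ a ≠ 1 := by
  rcases ha.lt_or_gt with ha | ha
  · exact (rpow_lt_one_of_one_lt_of_neg hz ha).ne
  · exact (one_lt_rpow hz ha).ne'

lemma setIntegral_lt_setIntegral_of_le_of_lt {X : Type*} [MeasurableSpace X] {μ : Measure X}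
    {f g : X → ℝ} {s t : Set X} (hs : MeasurableSet s) (hf : IntegrableOn f s μ)
    (hg : IntegrableOn g s μ) (hle : ∀ x ∈ s, f x ≤ g x) (hts : t ⊆ s) (ht : μ t ≠ 0)
    (hlt : ∀ x ∈ t, f x < g x) :
    ∫ x in s, f x ∂μ < ∫ x in s, g x ∂μ := by
  rw [← sub_pos, ← integral_sub hg hf, setIntegral_pos_iff_support_of_nonneg_ae]
  · refine (pos_iff_ne_zero.mpr ht).trans_le (measure_mono fun x hx => ⟨?_, hts hx⟩)
    exact (sub_pos.mpr (hlt x hx)).ne'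
  · filter_upwards [ae_restrict_mem hs] with x hx
    exact sub_nonneg.mpr (hle x hx)
  · exact hg.sub hf

lemma continuousOn_rpow_div_one_add_sq (a : ℝ) :
    ContinuousOn (fun z : ℝ => z ^ a / (1 + z ^ 2)) (Ioi 0) :=
  (continuousOn_id.rpow_const fun _ hz => Or.inl (ne_of_gt hz)).div (by fun_prop)
    fun _ _ => by positivity

lemma integrableOn_rpow_div_one_add_sq {a : ℝ} (h1 : -1 < a) (h2 : a < 1) :
    IntegrableOn (fun z : ℝ => z ^ a / (1 + z ^ 2)) (Ioi 0) := by
  have hmeas : ∀ s ⊆ Ioi (0 : ℝ), MeasurableSet s →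
      AEStronglyMeasurable (fun z : ℝ => z ^ a / (1 + z ^ 2)) (volume.restrict s) :=
    fun s hs hsm => ((continuousOn_rpow_div_one_add_sq a).mono hs).aestronglyMeasurable hsm
  have hnear : IntegrableOn (fun z : ℝ => z ^ a / (1 + z ^ 2)) (Ioo 0 1) := by
    refine ((intervalIntegral.integrableOn_Ioo_rpow_iff one_pos).mpr h1).mono'
      (hmeas _ Ioo_subset_Ioi_self measurableSet_Ioo) ?_
    filter_upwards [ae_restrict_mem measurableSet_Ioo] with z hz
    have hz0 : 0 < z := hz.1
    rw [norm_of_nonneg (by positivity)]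
    exact div_le_self (by positivity) (le_add_of_nonneg_right (sq_nonneg z))
  have hfar : IntegrableOn (fun z : ℝ => z ^ a / (1 + z ^ 2)) (Ici 1) := by
    refine ((integrableOn_Ici_iff_integrableOn_Ioi).mpr
      (integrableOn_Ioi_rpow_of_lt (by linarith : a - 2 < -1) one_pos)).mono'
      (hmeas _ (fun z (hz : 1 ≤ z) => one_pos.trans_le hz) measurableSet_Ici) ?_
    filter_upwards [ae_restrict_mem measurableSet_Ici] with z hz
    have hz0 : 0 < z := one_pos.trans_le hz
    rw [norm_of_nonneg (by positivity), rpow_sub hz0, rpow_two]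
    exact div_le_div_of_nonneg_left (by positivity) (by positivity) (by linarith)
  refine (hnear.union hfar).mono_set fun z hz => ?_
  rcases lt_or_ge z 1 with h | h
  exacts [Or.inl ⟨hz, h⟩, Or.inr h]

lemma integral_rpow_neg_div_one_add_sq (a : ℝ) :
    ∫ z in Ioi (0 : ℝ), z ^ (-a) / (1 + z ^ 2) = ∫ z in Ioi (0 : ℝ), z ^ a / (1 + z ^ 2) := by
  rw [← integral_comp_rpow_Ioi (fun z : ℝ => z ^ a / (1 + z ^ 2)) (neg_ne_zero.mpr one_ne_zero)]
  refine setIntegral_congr_fun measurableSet_Ioi fun z (hz : 0 < z) => ?_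
  have hinv : (z ^ (-1 : ℝ)) ^ a = z ^ (-a) := by rw [← rpow_mul hz.le, neg_one_mul]
  have hsq : z ^ ((-1 : ℝ) - 1) = (z ^ 2)⁻¹ := by
    rw [show (-1 : ℝ) - 1 = -2 by norm_num, rpow_neg hz.le, rpow_two]
  rw [smul_eq_mul, hinv, hsq, abs_neg, abs_one, one_mul, rpow_neg_one]
  field_simp
  ring

lemma integrable_one_div_one_add_sq : Integrable fun z : ℝ => 1 / (1 + z ^ 2) := by
  simpa only [one_div] using integrable_inv_one_add_sq

lemma integral_one_div_one_add_sq_lt_integral_rpow_div {a : ℝ} (ha : a ≠ 0) (h1 : -1 < a)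
    (h2 : a < 1) :
    ∫ z in Ioi (0 : ℝ), 1 / (1 + z ^ 2) < ∫ z in Ioi (0 : ℝ), z ^ a / (1 + z ^ 2) := by
  have hA := integrableOn_rpow_div_one_add_sq h1 h2
  have hB := integrableOn_rpow_div_one_add_sq (a := -a) (by linarith) (by linarith)
  have hmean : ∫ z in Ioi (0 : ℝ), 2 * (1 / (1 + z ^ 2)) <
      ∫ z in Ioi (0 : ℝ), (z ^ a / (1 + z ^ 2) + z ^ (-a) / (1 + z ^ 2)) := by
    refine setIntegral_lt_setIntegral_of_le_of_lt measurableSet_Ioi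
      (integrable_one_div_one_add_sq.integrableOn.const_mul 2) (hA.add hB) (fun z (hz : 0 < z) => ?_)
      (Ioi_subset_Ioi zero_le_one) (by simp) (fun z (hz : 1 < z) => ?_)
    · rw [← add_div, rpow_neg hz.le, mul_one_div]
      exact div_le_div_of_nonneg_right (two_le_add_inv (rpow_pos_of_pos hz a)) (by positivity)
    · have hz0 : 0 < z := zero_lt_one.trans hz
      rw [← add_div, rpow_neg hz0.le, mul_one_div]
      exact div_lt_div_of_pos_right
        (two_lt_add_inv (rpow_pos_of_pos hz0 a) (rpow_ne_one_of_one_lt hz ha)) (by positivity)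
  rw [integral_const_mul, integral_add hA hB, integral_rpow_neg_div_one_add_sq] at hmean
  linarith

theorem stmt_6 :
    IntegrableOn (fun z : ℝ => 1 / (1 + z ^ 2)) (Ioi 0) ∧
    IntegrableOn (fun z : ℝ => z ^ ((3 : ℝ) / 5) / (1 + z ^ 2)) (Ioi 0) ∧
    IntegrableOn (fun z : ℝ => z ^ (-(3 : ℝ) / 5) / (1 + z ^ 2)) (Ioi 0) ∧
    (∫ z in Ioi (0 : ℝ), 1 / (1 + z ^ 2)) ^ 2 <
      (∫ z in Ioi (0 : ℝ), z ^ ((3 : ℝ) / 5) / (1 + z ^ 2)) *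
      (∫ z in Ioi (0 : ℝ), z ^ (-(3 : ℝ) / 5) / (1 + z ^ 2)) := by
  rw [neg_div]
  refine ⟨integrable_one_div_one_add_sq.integrableOn,
    integrableOn_rpow_div_one_add_sq (by norm_num) (by norm_num),
    integrableOn_rpow_div_one_add_sq (by norm_num) (by norm_num), ?_⟩
  rw [integral_rpow_neg_div_one_add_sq, ← sq]
  exact pow_lt_pow_left₀
    (integral_one_div_one_add_sq_lt_integral_rpow_div (by norm_num) (by norm_num) (by norm_num))
    (setIntegral_nonneg measurableSet_Ioi fun z _ => by positivity) two_ne_zero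
end

section
/- There exists a constant c > 0 such that for all b with 0 < b ≤ 1, ∫₀^{1/4} b²·k^{−1/3}/((b + k^{5/3})² + b²) dk ≥ c·b^{2/5}. -/
open MeasureTheory Set Real

theorem stmt_19 :
    ∃ c : ℝ, 0 < c ∧ ∀ b : ℝ, 0 < b → b ≤ 1 →
      c * b ^ ((2 : ℝ) / 5) ≤
        ∫ k in Ioc (0 : ℝ) (1 / 4),
          b ^ 2 * k ^ (-(1 : ℝ) / 3) / ((b + k ^ ((5 : ℝ) / 3)) ^ 2 + b ^ 2) := by
  refine ⟨3/10 * (1/32 : ℝ) ^ ((2:ℝ)/5), by positivity, fun b hb hb1 => ?_⟩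
  set f : ℝ → ℝ := fun k => b ^ 2 * k ^ (-(1 : ℝ) / 3) / ((b + k ^ ((5 : ℝ) / 3)) ^ 2 + b ^ 2) with hf
  set L : ℝ := (b/32) ^ ((3:ℝ)/5) with hL
  have hbpos32 : (0:ℝ) < b/32 := by positivity
  have hLpos : 0 < L := rpow_pos_of_pos hbpos32 _
  -- (1/32)^(3/5) = 1/8
  have h32 : ((1:ℝ)/32) ^ ((3:ℝ)/5) = 1/8 := by
    rw [show ((1:ℝ)/32) = ((1:ℝ)/2) ^ ((5:ℕ):ℝ) by
        rw [Real.rpow_natCast]; norm_num,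
      ← Real.rpow_mul (by norm_num)]
    rw [show ((5:ℕ):ℝ) * ((3:ℝ)/5) = ((3:ℕ):ℝ) by norm_num, Real.rpow_natCast]
    norm_num
  have hL14 : L ≤ 1/4 := by
    have : L ≤ ((1:ℝ)/32) ^ ((3:ℝ)/5) :=
      Real.rpow_le_rpow (le_of_lt hbpos32) (by linarith) (by norm_num)
    rw [h32] at this; linarith
  -- L^(5/3) = b/32
  have hL53 : L ^ ((5:ℝ)/3) = b/32 := by
    rw [hL, ← Real.rpow_mul (le_of_lt hbpos32)]
    norm_num
  -- key pointwise bound on Ioc 0 L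
  have hden : ∀ k ∈ Ioc (0:ℝ) L, (0:ℝ) < (b + k ^ ((5:ℝ)/3)) ^ 2 + b ^ 2 := by
    intro k hk
    positivity
  have hkey : ∀ k ∈ Ioc (0:ℝ) L, k ^ (-(1:ℝ)/3) / 5 ≤ f k := by
    intro k hk
    have hk0 : 0 < k := hk.1
    have hk53 : k ^ ((5:ℝ)/3) ≤ b := by
      have : k ^ ((5:ℝ)/3) ≤ L ^ ((5:ℝ)/3) :=
        Real.rpow_le_rpow hk0.le hk.2 (by norm_num)
      rw [hL53] at this; linarith
    have hk53pos : 0 < k ^ ((5:ℝ)/3) := rpow_pos_of_pos hk0 _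
    have hden5 : (b + k ^ ((5:ℝ)/3)) ^ 2 + b ^ 2 ≤ 5 * b ^ 2 := by nlinarith
    have hnum : 0 ≤ b ^ 2 * k ^ (-(1:ℝ)/3) := by positivity
    have h1 : b ^ 2 * k ^ (-(1:ℝ)/3) / (5 * b ^ 2) ≤ f k :=
      div_le_div_of_nonneg_left hnum (hden k hk) hden5
    calc k ^ (-(1:ℝ)/3) / 5 = b ^ 2 * k ^ (-(1:ℝ)/3) / (5 * b ^ 2) := by
          field_simp
      _ ≤ f k := h1
  -- integrability of f on Ioc 0 (1/4)
  have hg_int : IntegrableOn (fun k : ℝ => k ^ (-(1:ℝ)/3)) (Ioc (0:ℝ) (1/4)) := by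
    rw [← intervalIntegrable_iff_integrableOn_Ioc_of_le (by norm_num)]
    exact intervalIntegral.intervalIntegrable_rpow' (by norm_num)
  have hf_meas : AEStronglyMeasurable f (volume.restrict (Ioc (0:ℝ) (1/4))) := by
    apply Measurable.aestronglyMeasurable
    fun_prop
  have hf_int : IntegrableOn f (Ioc (0:ℝ) (1/4)) := by
    apply Integrable.mono' hg_int hf_meas
    rw [ae_restrict_iff' measurableSet_Ioc]
    filter_upwards with k hk
    have hk0 : 0 < k := hk.1
    have hknn : 0 ≤ k ^ (-(1:ℝ)/3) := (rpow_pos_of_pos hk0 _).le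
    have hdpos : (0:ℝ) < (b + k ^ ((5:ℝ)/3)) ^ 2 + b ^ 2 := by positivity
    rw [Real.norm_of_nonneg (by positivity)]
    calc f k ≤ b ^ 2 * k ^ (-(1:ℝ)/3) / b ^ 2 :=
          div_le_div_of_nonneg_left (by positivity) (by positivity) (by nlinarith)
      _ = k ^ (-(1:ℝ)/3) := by field_simp
  -- monotone in set
  have hsub : ∫ k in Ioc (0:ℝ) L, f k ≤ ∫ k in Ioc (0:ℝ) (1/4), f k := by
    apply setIntegral_mono_set hf_int
    · filter_upwards [ae_restrict_mem measurableSet_Ioc] with k hk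
      have : 0 < k := hk.1
      simp only [hf]
      positivity
    · exact HasSubset.Subset.eventuallyLE (Ioc_subset_Ioc le_rfl hL14)
  -- lower bound on small interval
  have hf_int_L : IntegrableOn f (Ioc (0:ℝ) L) :=
    hf_int.mono_set (Ioc_subset_Ioc le_rfl hL14)
  have hg_int_L : IntegrableOn (fun k : ℝ => k ^ (-(1:ℝ)/3) / 5) (Ioc (0:ℝ) L) := by
    exact ((intervalIntegrable_iff_integrableOn_Ioc_of_le hLpos.le).1
      (intervalIntegral.intervalIntegrable_rpow' (by norm_num))).div_const 5
  have hmono : ∫ k in Ioc (0:ℝ) L, k ^ (-(1:ℝ)/3) / 5 ≤ ∫ k in Ioc (0:ℝ) L, f k :=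
    setIntegral_mono_on hg_int_L hf_int_L measurableSet_Ioc hkey
  -- compute the small integral
  have hcomp : ∫ k in Ioc (0:ℝ) L, k ^ (-(1:ℝ)/3) / 5 = 3/10 * L ^ ((2:ℝ)/3) := by
    rw [integral_div, ← intervalIntegral.integral_of_le hLpos.le,
      integral_rpow (Or.inl (by norm_num))]
    rw [show (-(1:ℝ)/3 + 1) = (2:ℝ)/3 by norm_num, Real.zero_rpow (by norm_num)]
    ring
  -- L^(2/3) = b^(2/5) * (1/32)^(2/5)
  have hL23 : L ^ ((2:ℝ)/3) = b ^ ((2:ℝ)/5) * ((1:ℝ)/32) ^ ((2:ℝ)/5) := by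
    rw [hL, ← Real.rpow_mul (le_of_lt hbpos32),
      show ((3:ℝ)/5) * ((2:ℝ)/3) = (2:ℝ)/5 by norm_num,
      show b/32 = b * (1/32) by ring,
      Real.mul_rpow hb.le (by norm_num)]
  calc 3/10 * (1/32 : ℝ) ^ ((2:ℝ)/5) * b ^ ((2:ℝ)/5)
      = ∫ k in Ioc (0:ℝ) L, k ^ (-(1:ℝ)/3) / 5 := by rw [hcomp, hL23]; ring
    _ ≤ ∫ k in Ioc (0:ℝ) L, f k := hmono
    _ ≤ ∫ k in Ioc (0:ℝ) (1/4), f k := hsub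
end
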